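/- arXiv:2402.13715 — 2 statements merged into one kernel-verified Lean document; each statement's English description precedes it below -/
import Mathlib

section
/- Fix Δ > 0, R_FEC ∈ (0,1], real numbers W_1,…,W_M, R_u, R_bf, a power budget P_j > 0, set D = (1−R_FEC)·R_u − R_bf, and let η > 0 and τ > 0. Define the case-2 (tilted Gibbs) probability vector p*_i = 2^{−ηΔi − τW_i} / ∑_{i'=1}^M 2^{−ηΔi' − τW_{i'}}. Assume the two conditions of Lemma 1, case 2: (c2^p) ∑_{i=1}^M (R_FEC·Δ·i − P_j)·2^{−ηΔi − τW_i} = 0 and (c2^r) ∑_{i=1}^M (R_FEC·W_i − D)·2^{−ηΔi − τW_i} = 0. Then p* is feasible for the convexified rate-adaptation problem — it satisfies the power equality R_FEC ∑_{i=1}^M Δ·i·p*_i = P_j and the rate constraint with equality T(p*) = Φ(p*) − R_bf — and it is optimal: every probability vector q on {1,…,M} satisfying R_FEC ∑_{i=1}^M Δ·i·q_i = P_j and T(q) ≤ Φ(q) − R_bf has T(q) ≤ T(p*). -/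
/-! `p*` is the softmax `2^{a_i} / ∑ 2^{a_j}` of `a_i = -ηΔi - τW_i`, and the conditions `c2p`, `c2r`
say exactly that `p*` meets the power equality and the rate constraint with equality. For a
feasible `q`, the power equality gives `∑ Δ i q_i = ∑ Δ i p*_i`, and the rate constraint gives
`∑ q_i W_i ≤ ∑ p*_i W_i`, so `∑ q_i a_i ≥ ∑ p*_i a_i` since `τ > 0`. By Gibbs' inequality the softmax
maximises `H(q) + ∑ q_i a_i` over probability vectors, hence `H(q) ≤ H(p*)`. -/

open Finset Real

theorem mul_log_le_mul_log_add_sub {p q : ℝ} (hp : 0 < p) (hq : 0 ≤ q) :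
    q * log p ≤ q * log q + (p - q) := by
  rcases hq.eq_or_lt with rfl | hq
  · simpa using hp.le
  have h := mul_le_mul_of_nonneg_left (log_le_sub_one_of_pos (div_pos hp hq)) hq.le
  rw [log_div hp.ne' hq.ne', mul_sub, mul_sub, mul_div_cancel₀ _ hq.ne'] at h
  linarith

/-- Gibbs' inequality. -/
theorem Finset.sum_mul_logb_le_sum_mul_logb {ι : Type*} {s : Finset ι} {b : ℝ} (hb : 1 < b)
    {p q : ι → ℝ} (hp : ∀ i ∈ s, 0 < p i) (hq : ∀ i ∈ s, 0 ≤ q i)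
    (hpq : ∑ i ∈ s, p i ≤ ∑ i ∈ s, q i) :
    ∑ i ∈ s, q i * logb b (p i) ≤ ∑ i ∈ s, q i * logb b (q i) := by
  have hlog : ∑ i ∈ s, q i * log (p i) ≤ ∑ i ∈ s, q i * log (q i) := by
    have h := sum_le_sum fun i hi => mul_log_le_mul_log_add_sub (hp i hi) (hq i hi)
    rw [sum_add_distrib, sum_sub_distrib] at h
    linarith
  simp only [logb, mul_div_assoc', ← sum_div]
  exact div_le_div_of_nonneg_right hlog (log_pos hb).le

noncomputable def softmax {ι : Type*} (s : Finset ι) (b : ℝ) (a : ι → ℝ) (i : ι) : ℝ :=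
  b ^ a i / ∑ j ∈ s, b ^ a j

section softmax

variable {ι : Type*} {s : Finset ι} {b : ℝ} {a : ι → ℝ}

theorem sum_rpow_pos (hb : 0 < b) (hs : s.Nonempty) : 0 < ∑ j ∈ s, b ^ a j :=
  sum_pos (fun _ _ => rpow_pos_of_pos hb _) hs

theorem softmax_pos (hb : 0 < b) (hs : s.Nonempty) (i : ι) : 0 < softmax s b a i :=
  div_pos (rpow_pos_of_pos hb _) (sum_rpow_pos hb hs)

theorem sum_softmax (hb : 0 < b) (hs : s.Nonempty) : ∑ i ∈ s, softmax s b a i = 1 := by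
  simp only [softmax, ← sum_div]
  exact div_self (sum_rpow_pos hb hs).ne'

theorem sum_mul_softmax_eq_of_sum_sub_mul_rpow_eq_zero (hb : 0 < b) (hs : s.Nonempty)
    {f : ι → ℝ} {c : ℝ} (h : ∑ i ∈ s, (f i - c) * b ^ a i = 0) :
    ∑ i ∈ s, f i * softmax s b a i = c := by
  simp only [sub_mul, sum_sub_distrib, ← mul_sum, sub_eq_zero] at h
  simp only [softmax, mul_div_assoc', ← sum_div, h]
  exact mul_div_cancel_right₀ c (sum_rpow_pos hb hs).ne'

theorem logb_softmax (hb : 0 < b) (hb₁ : b ≠ 1) (hs : s.Nonempty) (i : ι) :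
    logb b (softmax s b a i) = a i - logb b (∑ j ∈ s, b ^ a j) := by
  rw [softmax, logb_div (rpow_pos_of_pos hb _).ne' (sum_rpow_pos hb hs).ne',
    logb_rpow hb hb₁]

theorem sum_mul_logb_softmax (hb : 0 < b) (hb₁ : b ≠ 1) (hs : s.Nonempty) {q : ι → ℝ}
    (hq : ∑ i ∈ s, q i = 1) :
    ∑ i ∈ s, q i * logb b (softmax s b a i)
      = ∑ i ∈ s, q i * a i - logb b (∑ j ∈ s, b ^ a j) := by
  simp only [logb_softmax hb hb₁ hs, mul_sub, sum_sub_distrib, ← sum_mul, hq, one_mul]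

/-- The Gibbs variational principle. -/
theorem sum_mul_sub_sum_mul_logb_le_softmax (hb : 1 < b) (hs : s.Nonempty) {q : ι → ℝ}
    (hq₀ : ∀ i ∈ s, 0 ≤ q i) (hq₁ : ∑ i ∈ s, q i = 1) :
    ∑ i ∈ s, q i * a i - ∑ i ∈ s, q i * logb b (q i)
      ≤ ∑ i ∈ s, softmax s b a i * a i
        - ∑ i ∈ s, softmax s b a i * logb b (softmax s b a i) := by
  have hb₀ : 0 < b := zero_lt_one.trans hb
  have hp₁ := sum_softmax (a := a) hb₀ hs
  have hgibbs := sum_mul_logb_le_sum_mul_logb hb (fun i _ => softmax_pos hb₀ hs i) hq₀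
    (hp₁.trans hq₁.symm).le
  rw [sum_mul_logb_softmax hb₀ hb.ne' hs hq₁] at hgibbs
  rw [sum_mul_logb_softmax hb₀ hb.ne' hs hp₁]
  linarith

end softmax

theorem lemma1_case2_optimal_general
    (M : ℕ) (hM : 1 ≤ M) (Δ : ℝ)
    (RFEC : ℝ) (hRpos : 0 < RFEC)
    (W : ℕ → ℝ) (Ru Rbf : ℝ) (Pj : ℝ)
    (D : ℝ) (hD : D = (1 - RFEC) * Ru - Rbf)
    (η : ℝ) (τ : ℝ) (hτ : 0 < τ)
    (pstar : ℕ → ℝ)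
    (hpstar : ∀ i, pstar i =
      (2 : ℝ) ^ (-(η * Δ * (i : ℝ)) - τ * W i) /
        ∑ i' ∈ Finset.Icc 1 M, (2 : ℝ) ^ (-(η * Δ * (i' : ℝ)) - τ * W i'))
    (hc2p : ∑ i ∈ Finset.Icc 1 M,
      (RFEC * Δ * (i : ℝ) - Pj) * (2 : ℝ) ^ (-(η * Δ * (i : ℝ)) - τ * W i) = 0)
    (hc2r : ∑ i ∈ Finset.Icc 1 M,
      (RFEC * W i - D) * (2 : ℝ) ^ (-(η * Δ * (i : ℝ)) - τ * W i) = 0) :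
    -- feasibility: power equality
    (RFEC * ∑ i ∈ Finset.Icc 1 M, Δ * (i : ℝ) * pstar i = Pj) ∧
    -- feasibility: rate constraint holds with equality, T(pstar) = Φ(pstar) - Rbf
    (-RFEC * ∑ i ∈ Finset.Icc 1 M, pstar i * Real.logb 2 (pstar i)
      = (RFEC * (-(∑ i ∈ Finset.Icc 1 M, pstar i * Real.logb 2 (pstar i))
          - ∑ i ∈ Finset.Icc 1 M, pstar i * W i) + (1 - RFEC) * Ru) - Rbf) ∧
    -- optimality among all feasible probability vectors
    (∀ q : ℕ → ℝ,
      (∀ i ∈ Finset.Icc 1 M, 0 ≤ q i) →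
      (∑ i ∈ Finset.Icc 1 M, q i = 1) →
      (RFEC * ∑ i ∈ Finset.Icc 1 M, Δ * (i : ℝ) * q i = Pj) →
      (-RFEC * ∑ i ∈ Finset.Icc 1 M, q i * Real.logb 2 (q i)
        ≤ (RFEC * (-(∑ i ∈ Finset.Icc 1 M, q i * Real.logb 2 (q i))
            - ∑ i ∈ Finset.Icc 1 M, q i * W i) + (1 - RFEC) * Ru) - Rbf) →
      -RFEC * ∑ i ∈ Finset.Icc 1 M, q i * Real.logb 2 (q i)
        ≤ -RFEC * ∑ i ∈ Finset.Icc 1 M, pstar i * Real.logb 2 (pstar i)) := by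
  set a : ℕ → ℝ := fun i => -(η * Δ * (i : ℝ)) - τ * W i
  obtain rfl : pstar = softmax (Icc 1 M) 2 a := funext hpstar
  set p := softmax (Icc 1 M) 2 a
  have hs : (Icc 1 M).Nonempty := nonempty_Icc.mpr hM
  have hpow : RFEC * ∑ i ∈ Icc 1 M, Δ * i * p i = Pj := by
    rw [mul_sum, ← sum_mul_softmax_eq_of_sum_sub_mul_rpow_eq_zero two_pos hs hc2p]
    exact sum_congr rfl fun i _ => by ring
  have hrate : RFEC * ∑ i ∈ Icc 1 M, p i * W i = D := by
    rw [mul_sum, ← sum_mul_softmax_eq_of_sum_sub_mul_rpow_eq_zero two_pos hs hc2r]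
    exact sum_congr rfl fun i _ => by ring
  refine ⟨hpow, by linarith, fun q hq₀ hq₁ hqpow hqrate => ?_⟩
  have hpow_eq : ∑ i ∈ Icc 1 M, Δ * i * q i = ∑ i ∈ Icc 1 M, Δ * i * p i :=
    mul_left_cancel₀ hRpos.ne' (hqpow.trans hpow.symm)
  have hW : τ * ∑ i ∈ Icc 1 M, q i * W i ≤ τ * ∑ i ∈ Icc 1 M, p i * W i :=
    mul_le_mul_of_nonneg_left (le_of_mul_le_mul_left (by linarith) hRpos) hτ.le
  have hlin : ∀ r : ℕ → ℝ, ∑ i ∈ Icc 1 M, r i * a i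
      = -η * ∑ i ∈ Icc 1 M, Δ * i * r i - τ * ∑ i ∈ Icc 1 M, r i * W i := by
    intro r
    simp only [a, mul_sum, ← sum_sub_distrib]
    exact sum_congr rfl fun i _ => by ring
  have hvar := sum_mul_sub_sum_mul_logb_le_softmax (a := a) one_lt_two hs hq₀ hq₁
  rw [hlin, hlin, hpow_eq] at hvar
  rw [neg_mul, neg_mul, neg_le_neg_iff]
  exact mul_le_mul_of_nonneg_left (by linarith) hRpos.le

/-- **Lemma 1, case 2 (tilted Gibbs distribution) of the convexified rate-adaptation
problem.** Under the conditions `c2p` (power) and `c2r` (rate equality), the tilted Gibbs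
probability vector `pstar i = 2^{-ηΔi - τW_i} / ∑ 2^{-ηΔi' - τW_{i'}}` is feasible
(power equality and the rate constraint holds with equality) and optimal: any feasible
probability vector `q` has transmission rate `T(q) ≤ T(pstar)`. -/
theorem lemma1_case2_optimal
    (M : ℕ) (hM : 1 ≤ M) (Δ : ℝ) (hΔ : 0 < Δ)
    (RFEC : ℝ) (hRpos : 0 < RFEC) (hRle : RFEC ≤ 1)
    (W : ℕ → ℝ) (Ru Rbf : ℝ) (Pj : ℝ) (hPj : 0 < Pj)
    (D : ℝ) (hD : D = (1 - RFEC) * Ru - Rbf)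
    (η : ℝ) (hη : 0 < η) (τ : ℝ) (hτ : 0 < τ)
    (pstar : ℕ → ℝ)
    (hpstar : ∀ i, pstar i =
      (2 : ℝ) ^ (-(η * Δ * (i : ℝ)) - τ * W i) /
        ∑ i' ∈ Finset.Icc 1 M, (2 : ℝ) ^ (-(η * Δ * (i' : ℝ)) - τ * W i'))
    (hc2p : ∑ i ∈ Finset.Icc 1 M,
      (RFEC * Δ * (i : ℝ) - Pj) * (2 : ℝ) ^ (-(η * Δ * (i : ℝ)) - τ * W i) = 0)
    (hc2r : ∑ i ∈ Finset.Icc 1 M,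
      (RFEC * W i - D) * (2 : ℝ) ^ (-(η * Δ * (i : ℝ)) - τ * W i) = 0) :
    -- feasibility: power equality
    (RFEC * ∑ i ∈ Finset.Icc 1 M, Δ * (i : ℝ) * pstar i = Pj) ∧
    -- feasibility: rate constraint holds with equality, T(pstar) = Φ(pstar) - Rbf
    (-RFEC * ∑ i ∈ Finset.Icc 1 M, pstar i * Real.logb 2 (pstar i)
      = (RFEC * (-(∑ i ∈ Finset.Icc 1 M, pstar i * Real.logb 2 (pstar i))
          - ∑ i ∈ Finset.Icc 1 M, pstar i * W i) + (1 - RFEC) * Ru) - Rbf) ∧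
    -- optimality among all feasible probability vectors
    (∀ q : ℕ → ℝ,
      (∀ i ∈ Finset.Icc 1 M, 0 ≤ q i) →
      (∑ i ∈ Finset.Icc 1 M, q i = 1) →
      (RFEC * ∑ i ∈ Finset.Icc 1 M, Δ * (i : ℝ) * q i = Pj) →
      (-RFEC * ∑ i ∈ Finset.Icc 1 M, q i * Real.logb 2 (q i)
        ≤ (RFEC * (-(∑ i ∈ Finset.Icc 1 M, q i * Real.logb 2 (q i))
            - ∑ i ∈ Finset.Icc 1 M, q i * W i) + (1 - RFEC) * Ru) - Rbf) →
      -RFEC * ∑ i ∈ Finset.Icc 1 M, q i * Real.logb 2 (q i)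
        ≤ -RFEC * ∑ i ∈ Finset.Icc 1 M, pstar i * Real.logb 2 (pstar i)) :=
  lemma1_case2_optimal_general M hM Δ RFEC hRpos W Ru Rbf Pj D hD η τ hτ pstar hpstar hc2p hc2r
end

section
/- Let p and p̂ be probability vectors on {1,…,M} with all entries strictly positive, and let the channel densities f_i and output mixtures f^p, f^{p̂} be as in the context. Define g2(p) = ∑_{i=1}^M p_i ∫ f_i(y)·log( f^p(y) / (f_i(y)·p_i) ) dy and g2'(p,p̂) = ∑_{i=1}^M p_i ∫ f_i(y)·log( f^{p̂}(y) / (f_i(y)·p̂_i) ) dy. Then g2'(p,p̂) ≥ g2(p); in particular the surrogate function Φ built from g2' never exceeds the SDT achievable rate built from g2, so replacing the rate constraint by the surrogate constraint cannot violate the original rate constraint. -/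
open MeasureTheory

/-- Conditional density of the post-SIC received signal given symbol `i`:
a finite Gaussian mixture over the residual multiuser-interference values `b k`
with weights `w k`, signal points `μ_i = h·α·Δ·i` and noise variance `σ²`. -/
noncomputable def condDensity (σ h α Δ : ℝ) (K : ℕ) (w b : ℕ → ℝ)
    (i : ℕ) (y : ℝ) : ℝ :=
  ∑ k ∈ Finset.Icc 1 K,
    w k * (2 * Real.pi * σ ^ 2) ^ (-(1 / 2 : ℝ)) *
      Real.exp (-(y - h * α * Δ * (i : ℝ) - b k) ^ 2 / (2 * σ ^ 2))

/-- Output mixture density `f^q(y) = ∑ᵢ qᵢ fᵢ(y)`. -/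
noncomputable def outMix (M : ℕ) (f : ℕ → ℝ → ℝ) (q : ℕ → ℝ) (y : ℝ) : ℝ :=
  ∑ i ∈ Finset.Icc 1 M, q i * f i y

/-- `g2Fun M f p q = ∑ᵢ pᵢ ∫ fᵢ(y) log₂( f^q(y) / (fᵢ(y) qᵢ) ) dy`;
`g2Fun M f p p` is `g₂(p)` and `g2Fun M f p p̂` is the surrogate `g₂'(p, p̂)`. -/
noncomputable def g2Fun (M : ℕ) (f : ℕ → ℝ → ℝ) (p q : ℕ → ℝ) : ℝ :=
  ∑ i ∈ Finset.Icc 1 M,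
    p i * ∫ y : ℝ, f i y * Real.logb 2 (outMix M f q y / (f i y * q i))


open Real Finset

/-! For fixed `y`, `∑ᵢ pᵢ fᵢ(y) (log (f^{p̂}(y) / (fᵢ(y) p̂ᵢ)) - log (f^p(y) / (fᵢ(y) pᵢ)))`
equals `∑ᵢ pᵢ fᵢ(y) log (pᵢ f^{p̂}(y) / (p̂ᵢ f^p(y)))`, which is nonnegative by the log-sum (Gibbs)
inequality: `log x ≥ 1 - 1/x` bounds it below by `∑ᵢ (pᵢ fᵢ(y) - p̂ᵢ fᵢ(y) f^p(y) / f^{p̂}(y)) = 0`.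
Integrating over `y` gives the claim. The integrals are finite because
`0 ≤ fᵢ log (f^q / (fᵢ qᵢ)) ≤ f^q / qᵢ`, from `qᵢ fᵢ ≤ f^q` and `log x ≤ x`. -/

theorem mul_logb_div_add_le {a p q P Q : ℝ} (ha : 0 ≤ a) (hp : 0 < p) (hq : 0 < q)
    (hP : 0 < P) (hQ : 0 < Q) :
    p * (a * logb 2 (P / (a * p))) + (p * a - q * a * (P / Q)) / log 2
      ≤ p * (a * logb 2 (Q / (a * q))) := by
  rcases ha.eq_or_lt with rfl | ha
  · simp
  set x := p * Q / (q * P) with hx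
  have hx0 : 0 < x := by positivity
  have hsplit : log (Q / (a * q)) = log (P / (a * p)) + log x := by
    rw [← log_mul (by positivity) hx0.ne', hx]
    congr 1
    field_simp
  have hlin : p * a - q * a * (P / Q) = p * a * (1 - x⁻¹) := by
    rw [hx]; field_simp
  have hgibbs : p * a * (1 - x⁻¹) ≤ p * a * log x :=
    mul_le_mul_of_nonneg_left (one_sub_inv_le_log_of_pos hx0) (by positivity)
  have hlog2 : 0 < log 2 := log_pos one_lt_two
  rw [← sub_nonneg]
  have hdiff : p * (a * logb 2 (Q / (a * q)))
        - (p * (a * logb 2 (P / (a * p))) + (p * a - q * a * (P / Q)) / log 2)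
      = (p * a * log x - p * a * (1 - x⁻¹)) / log 2 := by
    rw [logb, logb, hsplit, hlin]; ring
  rw [hdiff]
  exact div_nonneg (sub_nonneg.2 hgibbs) hlog2.le

theorem sum_mul_logb_div_le_sum_mul_logb_div {ι : Type*} (s : Finset ι) {a p q : ι → ℝ}
    (ha : ∀ i ∈ s, 0 ≤ a i) (hp : ∀ i ∈ s, 0 < p i) (hq : ∀ i ∈ s, 0 < q i) :
    ∑ i ∈ s, p i * (a i * logb 2 ((∑ j ∈ s, p j * a j) / (a i * p i)))
      ≤ ∑ i ∈ s, p i * (a i * logb 2 ((∑ j ∈ s, q j * a j) / (a i * q i))) := by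
  by_cases hzero : ∀ i ∈ s, a i = 0
  · exact (sum_eq_zero fun i hi => by simp [hzero i hi]).trans_le
      (sum_eq_zero fun i hi => by simp [hzero i hi]).ge
  push Not at hzero
  set P := ∑ j ∈ s, p j * a j
  set Q := ∑ j ∈ s, q j * a j
  obtain ⟨i₀, hi₀, hai₀⟩ := hzero
  have hpos : ∀ r : ι → ℝ, (∀ i ∈ s, 0 < r i) → 0 < ∑ j ∈ s, r j * a j :=
    fun r hr => (mul_pos (hr i₀ hi₀) ((ha i₀ hi₀).lt_of_ne' hai₀)).trans_le
        (single_le_sum (fun j hj => mul_nonneg (hr j hj).le (ha j hj)) hi₀)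
  have hQ : 0 < Q := hpos q hq
  calc _ ≤ ∑ i ∈ s, (p i * (a i * logb 2 (Q / (a i * q i)))
          - (p i * a i - q i * a i * (P / Q)) / log 2) :=
        sum_le_sum fun i hi => le_sub_iff_add_le.2 <|
          mul_logb_div_add_le (ha i hi) (hp i hi) (hq i hi) (hpos p hp) hQ
    _ = ∑ i ∈ s, p i * (a i * logb 2 (Q / (a i * q i))) - (P - Q * (P / Q)) / log 2 := by
        rw [sum_sub_distrib, ← sum_div, sum_sub_distrib, ← sum_mul]
    _ = _ := by rw [mul_div_cancel₀ _ hQ.ne', sub_self, zero_div, sub_zero]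

section OutputMixture

variable {M : ℕ} {f : ℕ → ℝ → ℝ}

theorem integrable_outMix {μ : Measure ℝ} (q : ℕ → ℝ)
    (hfi : ∀ i ∈ Icc 1 M, Integrable (f i) μ) :
    Integrable (outMix M f q) μ :=
  integrable_finsetSum _ fun i hi => (hfi i hi).const_mul (q i)

theorem mul_le_outMix {q : ℕ → ℝ} (hf0 : ∀ i ∈ Icc 1 M, ∀ y, 0 ≤ f i y)
    (hq : ∀ i ∈ Icc 1 M, 0 < q i) {i : ℕ} (hi : i ∈ Icc 1 M) (y : ℝ) :
    q i * f i y ≤ outMix M f q y :=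
  single_le_sum (f := fun j => q j * f j y) (fun j hj => mul_nonneg (hq j hj).le (hf0 j hj y)) hi

theorem norm_mul_logb_outMix_le {q : ℕ → ℝ} (hf0 : ∀ i ∈ Icc 1 M, ∀ y, 0 ≤ f i y)
    (hq : ∀ i ∈ Icc 1 M, 0 < q i) {i : ℕ} (hi : i ∈ Icc 1 M) (y : ℝ) :
    ‖f i y * logb 2 (outMix M f q y / (f i y * q i))‖ ≤ outMix M f q y / (q i * log 2) := by
  have hle := mul_le_outMix hf0 hq hi y
  have hqi := hq i hi
  have hlog2 : 0 < log 2 := log_pos one_lt_two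
  rcases (hf0 i hi y).eq_or_lt with h0 | hpos
  · rw [← h0] at hle ⊢
    simp only [zero_mul, norm_zero]
    exact div_nonneg (by linarith) (by positivity)
  have hr : 1 ≤ outMix M f q y / (f i y * q i) := by
    rw [one_le_div (by positivity)]; linarith
  rw [Real.norm_of_nonneg (mul_nonneg hpos.le (logb_nonneg one_lt_two hr))]
  calc f i y * logb 2 (outMix M f q y / (f i y * q i))
      = f i y * log (outMix M f q y / (f i y * q i)) / log 2 := by rw [logb]; ring
    _ ≤ f i y * (outMix M f q y / (f i y * q i)) / log 2 := by
        gcongr; exact log_le_self (by positivity)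
    _ = outMix M f q y / (q i * log 2) := by field_simp

theorem integrable_mul_logb_outMix {μ : Measure ℝ} {q : ℕ → ℝ}
    (hf0 : ∀ i ∈ Icc 1 M, ∀ y, 0 ≤ f i y) (hfm : ∀ i ∈ Icc 1 M, Measurable (f i))
    (hfi : ∀ i ∈ Icc 1 M, Integrable (f i) μ) (hq : ∀ i ∈ Icc 1 M, 0 < q i)
    {i : ℕ} (hi : i ∈ Icc 1 M) :
    Integrable (fun y => f i y * logb 2 (outMix M f q y / (f i y * q i))) μ := by
  have hmix : Measurable (outMix M f q) :=
    Finset.measurable_sum _ fun j hj => (hfm j hj).const_mul _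
  refine ((integrable_outMix q hfi).div_const _).mono' ?_
    (ae_of_all _ (norm_mul_logb_outMix_le hf0 hq hi))
  have hfmi := hfm i hi
  refine Measurable.aestronglyMeasurable ?_
  simp only [logb]
  fun_prop

theorem g2Fun_le_g2Fun (hf0 : ∀ i ∈ Icc 1 M, ∀ y, 0 ≤ f i y)
    (hfm : ∀ i ∈ Icc 1 M, Measurable (f i)) (hfi : ∀ i ∈ Icc 1 M, Integrable (f i))
    {p q : ℕ → ℝ} (hp : ∀ i ∈ Icc 1 M, 0 < p i) (hq : ∀ i ∈ Icc 1 M, 0 < q i) :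
    g2Fun M f p p ≤ g2Fun M f p q := by
  have hterm : ∀ r : ℕ → ℝ, (∀ i ∈ Icc 1 M, 0 < r i) → ∀ i ∈ Icc 1 M,
      Integrable fun y => p i * (f i y * logb 2 (outMix M f r y / (f i y * r i))) :=
    fun r hr i hi => (integrable_mul_logb_outMix hf0 hfm hfi hr hi).const_mul (p i)
  have hg2 : ∀ r : ℕ → ℝ, (∀ i ∈ Icc 1 M, 0 < r i) → g2Fun M f p r
      = ∫ y, ∑ i ∈ Icc 1 M, p i * (f i y * logb 2 (outMix M f r y / (f i y * r i))) :=
    fun r hr => by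
      rw [integral_finsetSum _ (hterm r hr)]
      simp only [integral_const_mul, g2Fun]
  rw [hg2 p hp, hg2 q hq]
  exact integral_mono (integrable_finsetSum _ (hterm p hp)) (integrable_finsetSum _ (hterm q hq))
    fun y => sum_mul_logb_div_le_sum_mul_logb_div _ (fun i hi => hf0 i hi y) hp hq

end OutputMixture

section ConditionalDensity

variable {σ h α Δ : ℝ} {K : ℕ} {w b : ℕ → ℝ}

theorem condDensity_nonneg (hw : ∀ k ∈ Icc 1 K, 0 ≤ w k) (i : ℕ) (y : ℝ) :
    0 ≤ condDensity σ h α Δ K w b i y :=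
  sum_nonneg fun k hk => by have := hw k hk; positivity

theorem continuous_condDensity (i : ℕ) : Continuous (condDensity σ h α Δ K w b i) := by
  unfold condDensity; fun_prop

theorem integrable_condDensity (hσ : σ ≠ 0) (i : ℕ) :
    Integrable (condDensity σ h α Δ K w b i) := by
  refine integrable_finsetSum _ fun k _ => Integrable.const_mul ?_ _
  have hgauss := (integrable_exp_neg_mul_sq (b := (2 * σ ^ 2)⁻¹) (by positivity)).comp_sub_right
    (h * α * Δ * i + b k)
  convert hgauss using 3 with y
  ring

end ConditionalDensity

theorem surrogate_dominates_general
    (M : ℕ) (σ h α Δ : ℝ)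
    (hσ : 0 < σ)
    (K : ℕ) (w b : ℕ → ℝ)
    (hw : ∀ k ∈ Finset.Icc 1 K, 0 ≤ w k)
    (p phat : ℕ → ℝ)
    (hp : ∀ i ∈ Finset.Icc 1 M, 0 < p i)
    (hphat : ∀ i ∈ Finset.Icc 1 M, 0 < phat i)
    (f : ℕ → ℝ → ℝ) (hf : f = condDensity σ h α Δ K w b) :
    g2Fun M f p p ≤ g2Fun M f p phat := by
  subst hf
  exact g2Fun_le_g2Fun (fun i _ => condDensity_nonneg hw i)
    (fun i _ => (continuous_condDensity i).measurable)
    (fun i _ => integrable_condDensity hσ.ne' i) hp hphat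

/-- **Surrogate domination.** `g₂'(p, p̂) ≥ g₂(p)`: the surrogate function `Φ` built from
`g₂'` never exceeds the SDT achievable rate built from `g₂`, so replacing the rate
constraint by the surrogate constraint cannot violate the original rate constraint. -/
theorem surrogate_dominates
    (M : ℕ) (hM : 1 ≤ M) (σ h α Δ : ℝ)
    (hσ : 0 < σ) (hh : 0 < h) (hα : 0 < α) (hΔ : 0 < Δ)
    (K : ℕ) (hK : 1 ≤ K) (w b : ℕ → ℝ)
    (hw : ∀ k ∈ Finset.Icc 1 K, 0 ≤ w k)
    (hwsum : ∑ k ∈ Finset.Icc 1 K, w k = 1)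
    (p phat : ℕ → ℝ)
    (hp : ∀ i ∈ Finset.Icc 1 M, 0 < p i)
    (hpsum : ∑ i ∈ Finset.Icc 1 M, p i = 1)
    (hphat : ∀ i ∈ Finset.Icc 1 M, 0 < phat i)
    (hphatsum : ∑ i ∈ Finset.Icc 1 M, phat i = 1)
    (f : ℕ → ℝ → ℝ) (hf : f = condDensity σ h α Δ K w b) :
    g2Fun M f p p ≤ g2Fun M f p phat :=
  surrogate_dominates_general M σ h α Δ hσ K w b hw p phat hp hphat f hf
end
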